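/- Let S be a CPTP map on M_d admitting a Doeblin minorization: there exist ε ∈ (0,1] and a density matrix τ such that S(X) ≥ ε·tr(X)·τ in the Loewner order for all positive semidefinite X. Then κ_tr(S) ≤ 1 − ε. -/

import Mathlib

open Matrix
open scoped ComplexOrder

namespace TD

variable {d : ℕ}

noncomputable def trNorm (A : Matrix (Fin d) (Fin d) ℂ) : ℝ :=
  (((Matrix.posSemidef_conjTranspose_mul_self A).1.eigenvectorUnitary.1 *
      diagonal (((↑) : ℝ → ℂ) ∘ (Real.sqrt ∘ (Matrix.posSemidef_conjTranspose_mul_self A).1.eigenvalues)) *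
      (star (Matrix.posSemidef_conjTranspose_mul_self A).1.eigenvectorUnitary :
        Matrix (Fin d) (Fin d) ℂ)).trace).re

noncomputable def hsNorm (A : Matrix (Fin d) (Fin d) ℂ) : ℝ :=
  Real.sqrt ((Aᴴ * A).trace.re)

def Density (ρ : Matrix (Fin d) (Fin d) ℂ) : Prop :=
  ρ.PosSemidef ∧ ρ.trace = 1

def PosMap (T : Matrix (Fin d) (Fin d) ℂ →ₗ[ℂ] Matrix (Fin d) (Fin d) ℂ) : Prop :=
  ∀ A, A.PosSemidef → (T A).PosSemidef

def TrPres (T : Matrix (Fin d) (Fin d) ℂ →ₗ[ℂ] Matrix (Fin d) (Fin d) ℂ) : Prop :=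
  ∀ A, (T A).trace = A.trace

noncomputable def kappaTr (T : Matrix (Fin d) (Fin d) ℂ →ₗ[ℂ] Matrix (Fin d) (Fin d) ℂ) : ℝ :=
  ⨆ X : {X : Matrix (Fin d) (Fin d) ℂ // X.IsHermitian ∧ X.trace = 0 ∧ X ≠ 0},
    trNorm (T X.1) / trNorm X.1

noncomputable def opNorm1 (L : Matrix (Fin d) (Fin d) ℂ →ₗ[ℂ] Matrix (Fin d) (Fin d) ℂ) : ℝ :=
  ⨆ X : {X : Matrix (Fin d) (Fin d) ℂ // X ≠ 0}, trNorm (L X.1) / trNorm X.1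

noncomputable def s0 (T : Matrix (Fin d) (Fin d) ℂ →ₗ[ℂ] Matrix (Fin d) (Fin d) ℂ) : ℝ :=
  ⨆ X : {X : Matrix (Fin d) (Fin d) ℂ // X.trace = 0 ∧ X ≠ 0},
    hsNorm (T X.1) / hsNorm X.1

noncomputable def choi (T : Matrix (Fin d) (Fin d) ℂ →ₗ[ℂ] Matrix (Fin d) (Fin d) ℂ) :
    Matrix (Fin d × Fin d) (Fin d × Fin d) ℂ :=
  Matrix.of fun p q => T (Matrix.single p.1 q.1 1) p.2 q.2

def CP (T : Matrix (Fin d) (Fin d) ℂ →ₗ[ℂ] Matrix (Fin d) (Fin d) ℂ) : Prop :=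
  (choi T).PosSemidef

noncomputable def replaceChan (τ : Matrix (Fin d) (Fin d) ℂ) :
    Matrix (Fin d) (Fin d) ℂ →ₗ[ℂ] Matrix (Fin d) (Fin d) ℂ where
  toFun X := X.trace • τ
  map_add' X Y := by simp [Matrix.trace_add, add_smul]
  map_smul' c X := by simp [Matrix.trace_smul, smul_smul]

noncomputable def prodComp {n : ℕ} (T : Fin n → (Matrix (Fin d) (Fin d) ℂ →ₗ[ℂ] Matrix (Fin d) (Fin d) ℂ)) :
    Matrix (Fin d) (Fin d) ℂ →ₗ[ℂ] Matrix (Fin d) (Fin d) ℂ :=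
  (List.ofFn T).foldl (fun acc f => f ∘ₗ acc) LinearMap.id

noncomputable def lpow (T : Matrix (Fin d) (Fin d) ℂ →ₗ[ℂ] Matrix (Fin d) (Fin d) ℂ) :
    ℕ → (Matrix (Fin d) (Fin d) ℂ →ₗ[ℂ] Matrix (Fin d) (Fin d) ℂ)
  | 0 => LinearMap.id
  | n + 1 => T ∘ₗ lpow T n

noncomputable def conjPair (K0 K1 : Matrix (Fin 2) (Fin 2) ℂ) :
    Matrix (Fin 2) (Fin 2) ℂ →ₗ[ℂ] Matrix (Fin 2) (Fin 2) ℂ where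
  toFun X := K0 * X * K0ᴴ + K1 * X * K1ᴴ
  map_add' X Y := by
    simp only [Matrix.mul_add, Matrix.add_mul]
    abel
  map_smul' c X := by
    simp [Matrix.mul_smul, Matrix.smul_mul, smul_add]

end TD

/-!
Split a Hermitian trace-zero `X` into its positive and negative parts, `X = X⁺ - X⁻`, which have
equal trace `t` and `‖X‖₁ = 2t`. Subtracting the same `ε t τ` from `S X⁺` and `S X⁻` writes
`S X` as a difference of two positive matrices of trace `(1 - ε) t` each, and
`‖A - B‖₁ ≤ tr A + tr B` for positive `A`, `B`.
-/

open scoped MatrixOrder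

namespace Matrix

variable {n : Type*} [Fintype n] {A P : Matrix n n ℂ}

theorem PosSemidef.re_trace_nonneg (hA : A.PosSemidef) : 0 ≤ A.trace.re :=
  (Complex.nonneg_iff.mp hA.trace_nonneg).1

theorem trace_eq_trace_mul_mul_add [DecidableEq n] (hP : IsIdempotentElem P) (A : Matrix n n ℂ) :
    A.trace = (P * A * P).trace + ((1 - P) * A * (1 - P)).trace := by
  have hPAP : (P * A * P).trace = (A * P).trace := by
    rw [trace_mul_cycle, hP.eq, trace_mul_comm]
  have hPA : (P * A).trace = (A * P).trace := trace_mul_comm _ _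
  simp only [sub_mul, mul_sub, one_mul, mul_one, trace_sub, hPAP, hPA]
  ring

theorem PosSemidef.re_trace_mul_mul_nonneg (hA : A.PosSemidef) (hP : IsSelfAdjoint P) :
    0 ≤ (P * A * P).trace.re := by
  have hPAP := hA.mul_mul_conjTranspose_same P
  rw [← star_eq_conjTranspose, hP.star_eq] at hPAP
  exact hPAP.re_trace_nonneg

theorem PosSemidef.re_trace_mul_mul_le [DecidableEq n] (hA : A.PosSemidef)
    (hP : IsStarProjection P) : (P * A * P).trace.re ≤ A.trace.re := by
  have := hA.re_trace_mul_mul_nonneg hP.one_sub.isSelfAdjoint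
  rw [trace_eq_trace_mul_mul_add hP.isIdempotentElem A, Complex.add_re]
  linarith

/-- `P` is the spectral projection of `M` onto `[0, ∞)`; the functional calculus may use this
discontinuous indicator because the spectrum of a matrix is finite. -/
theorem IsHermitian.exists_isStarProjection_mul_mul_eq_posPart [DecidableEq n] {M : Matrix n n ℂ}
    (hM : M.IsHermitian) : ∃ P : Matrix n n ℂ, IsStarProjection P ∧ P * M * P = M⁺ := by
  have hcont (f : ℝ → ℝ) : ContinuousOn f (spectrum ℝ M) := M.finite_real_spectrum.continuousOn f
  let χ : ℝ → ℝ := fun t => if 0 ≤ t then 1 else 0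
  refine ⟨cfc χ M, ⟨?_, cfc_predicate χ M⟩, ?_⟩
  · rw [IsIdempotentElem, ← cfc_mul χ χ M (hcont _) (hcont _)]
    exact cfc_congr fun t _ => by by_cases h : 0 ≤ t <;> simp [χ, h]
  · nth_rewrite 2 [← cfc_id' ℝ M hM.isSelfAdjoint]
    rw [← cfc_mul _ _ M (hcont _) (hcont _), ← cfc_mul _ _ M (hcont _) (hcont _),
      CFC.posPart_def, cfcₙ_eq_cfc]
    exact cfc_congr fun t _ => by by_cases h : 0 ≤ t <;> simp [χ, h, le_of_not_ge]

theorem PosSemidef.re_trace_posPart_sub_le [DecidableEq n] {A B : Matrix n n ℂ}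
    (hA : A.PosSemidef) (hB : B.PosSemidef) : ((A - B)⁺).trace.re ≤ A.trace.re := by
  obtain ⟨P, hP, hPMP⟩ := (hA.1.sub hB.1).exists_isStarProjection_mul_mul_eq_posPart
  rw [← hPMP, mul_sub, sub_mul, trace_sub, Complex.sub_re]
  linarith [hA.re_trace_mul_mul_le hP, hB.re_trace_mul_mul_nonneg hP.isSelfAdjoint]

end Matrix

namespace TD

variable {d : ℕ}

theorem trNorm_eq_re_trace_abs (A : Matrix (Fin d) (Fin d) ℂ) :
    trNorm A = (CFC.abs A).trace.re := by
  have hH := (posSemidef_conjTranspose_mul_self A).1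
  rw [CFC.abs, star_eq_conjTranspose,
    CFC.sqrt_eq_real_sqrt _ (posSemidef_conjTranspose_mul_self A).nonneg,
    cfcₙ_eq_cfc (hf0 := by simp), hH.cfc_eq, IsHermitian.cfc, Unitary.conjStarAlgAut_apply]
  rfl

theorem trNorm_nonneg (A : Matrix (Fin d) (Fin d) ℂ) : 0 ≤ trNorm A := by
  rw [trNorm_eq_re_trace_abs]
  exact (nonneg_iff_posSemidef.mp (CFC.abs_nonneg A)).re_trace_nonneg

theorem trNorm_eq_of_isHermitian {A : Matrix (Fin d) (Fin d) ℂ} (hA : A.IsHermitian) :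
    trNorm A = (A⁺).trace.re + (A⁻).trace.re := by
  rw [trNorm_eq_re_trace_abs, ← CFC.posPart_add_negPart A hA.isSelfAdjoint, trace_add,
    Complex.add_re]

theorem trNorm_sub_le {A B : Matrix (Fin d) (Fin d) ℂ} (hA : A.PosSemidef) (hB : B.PosSemidef) :
    trNorm (A - B) ≤ A.trace.re + B.trace.re := by
  have hneg : (A - B)⁻ = (B - A)⁺ := by rw [← CFC.negPart_neg, neg_sub]
  rw [trNorm_eq_of_isHermitian (hA.1.sub hB.1), hneg]
  exact add_le_add (hA.re_trace_posPart_sub_le hB) (hB.re_trace_posPart_sub_le hA)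

theorem trNorm_map_le_of_minorization
    {S : Matrix (Fin d) (Fin d) ℂ →ₗ[ℂ] Matrix (Fin d) (Fin d) ℂ} (htr : TrPres S) {ε : ℝ}
    {τ : Matrix (Fin d) (Fin d) ℂ} (hτ : τ.trace = 1)
    (hmin : ∀ X : Matrix (Fin d) (Fin d) ℂ, X.PosSemidef →
      (S X - ((ε : ℂ) * X.trace) • τ).PosSemidef)
    {X : Matrix (Fin d) (Fin d) ℂ} (hX : X.IsHermitian) (hX0 : X.trace = 0) :
    trNorm (S X) ≤ (1 - ε) * trNorm X := by
  have hP : (X⁺).PosSemidef := nonneg_iff_posSemidef.mp (CFC.posPart_nonneg X)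
  have hN : (X⁻).PosSemidef := nonneg_iff_posSemidef.mp (CFC.negPart_nonneg X)
  have hPN : (X⁺).trace = (X⁻).trace := by
    rw [← sub_eq_zero, ← trace_sub, CFC.posPart_sub_negPart X hX.isSelfAdjoint, hX0]
  have hSX : S X =
      (S X⁺ - ((ε : ℂ) * (X⁺).trace) • τ) - (S X⁻ - ((ε : ℂ) * (X⁻).trace) • τ) := by
    rw [hPN, sub_sub_sub_cancel_right, ← map_sub, CFC.posPart_sub_negPart X hX.isSelfAdjoint]
  have htrace (Y : Matrix (Fin d) (Fin d) ℂ) :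
      (S Y - ((ε : ℂ) * Y.trace) • τ).trace.re = (1 - ε) * Y.trace.re := by
    simp only [trace_sub, htr Y, trace_smul, hτ, smul_eq_mul, mul_one, Complex.sub_re,
      Complex.mul_re, Complex.ofReal_re, Complex.ofReal_im, zero_mul, sub_zero]
    ring
  calc trNorm (S X)
      ≤ (S X⁺ - ((ε : ℂ) * (X⁺).trace) • τ).trace.re
        + (S X⁻ - ((ε : ℂ) * (X⁻).trace) • τ).trace.re :=
        hSX ▸ trNorm_sub_le (hmin _ hP) (hmin _ hN)
    _ = (1 - ε) * trNorm X := by rw [htrace, htrace, trNorm_eq_of_isHermitian hX]; ring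

end TD

theorem stmt10_general {d : ℕ}
    (S : Matrix (Fin d) (Fin d) ℂ →ₗ[ℂ] Matrix (Fin d) (Fin d) ℂ)
    (htr : TD.TrPres S)
    (ε : ℝ) (hε : 0 < ε ∧ ε ≤ 1) (τ : Matrix (Fin d) (Fin d) ℂ) (hτ : TD.Density τ)
    (hmin : ∀ X : Matrix (Fin d) (Fin d) ℂ, X.PosSemidef →
      (S X - ((ε : ℂ) * X.trace) • τ).PosSemidef) :
    TD.kappaTr S ≤ 1 - ε := by
  have h1ε : 0 ≤ 1 - ε := sub_nonneg.mpr hε.2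
  refine Real.iSup_le (fun ⟨X, hX, hX0, _⟩ => ?_) h1ε
  exact div_le_of_le_mul₀ (TD.trNorm_nonneg X) h1ε
    (TD.trNorm_map_le_of_minorization htr hτ.2 hmin hX hX0)

theorem stmt10 {d : ℕ} (hd : 2 ≤ d)
    (S : Matrix (Fin d) (Fin d) ℂ →ₗ[ℂ] Matrix (Fin d) (Fin d) ℂ)
    (hcp : TD.CP S) (htr : TD.TrPres S)
    (ε : ℝ) (hε : 0 < ε ∧ ε ≤ 1) (τ : Matrix (Fin d) (Fin d) ℂ) (hτ : TD.Density τ)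
    (hmin : ∀ X : Matrix (Fin d) (Fin d) ℂ, X.PosSemidef →
      (S X - ((ε : ℂ) * X.trace) • τ).PosSemidef) :
    TD.kappaTr S ≤ 1 - ε :=
  stmt10_general S htr ε hε τ hτ hmin
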